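/- Let D_1 = δ + ∂_d and D_2 = ∂_0. For any λ, λ_0, λ_1, …, λ_d ∈ K, set f = λ·x_2 + Σ_{k=0}^d λ_k · x_1^k ∏_{j=3}^m x_j^{α_{j2} − k·α_{j1}} ∈ C. Then for all s_1, s_2 ∈ K: (s_1 D_1 + s_2 D_2)(f) = 0 if and only if λ·s_2 + λ_1·s_1 = 0, λ_k·s_1 = 0 for all 2 ≤ k ≤ d, and λ·s_1 = 0. In particular, if λ ≠ 0 and (s_1 D_1 + s_2 D_2)(f) = 0 then s_1 = s_2 = 0. -/
import Mathlib


open MvPolynomial Finset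

private lemma prodXpow' {σ : Type*} {R : Type*} [CommSemiring R] [DecidableEq σ]
    (s : Finset σ) (e : σ → ℕ) :
    (∏ j ∈ s, (X j : MvPolynomial σ R) ^ e j) =
      monomial (∑ j ∈ s, Finsupp.single j (e j)) 1 := by
  induction s using Finset.cons_induction with
  | empty => simp
  | cons a s ha ih =>
      rw [Finset.prod_cons, Finset.sum_cons, ih, X_pow_eq_monomial, monomial_mul, one_mul]

/-- The derivation `δ = (∏_{j=3}^m x_j^{α_{j1}}) ∂/∂x_1` of `K[x_1, …, x_m]`
(variables are indexed by `Fin m`, so `x_1` is `X ⟨0,_⟩`, `x_2` is `X ⟨1,_⟩`, and the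
indices `3 ≤ j ≤ m` are those `j : Fin m` with `2 ≤ j.val`). -/
noncomputable def deltaD (K : Type*) [Field K] (m : ℕ) (hm : 2 ≤ m) (α1 : Fin m → ℕ) :
    Derivation K (MvPolynomial (Fin m) K) (MvPolynomial (Fin m) K) :=
  (∏ j ∈ Finset.univ.filter (fun j : Fin m => 2 ≤ j.val),
      (X j : MvPolynomial (Fin m) K) ^ α1 j) • pderiv (⟨0, by omega⟩ : Fin m)

/-- The derivation `∂_k = x_1^k (∏_{j=3}^m x_j^{α_{j2} - k α_{j1}}) ∂/∂x_2`. -/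
noncomputable def partialD (K : Type*) [Field K] (m : ℕ) (hm : 2 ≤ m)
    (α1 α2 : Fin m → ℕ) (k : ℕ) :
    Derivation K (MvPolynomial (Fin m) K) (MvPolynomial (Fin m) K) :=
  ((X (⟨0, by omega⟩ : Fin m) : MvPolynomial (Fin m) K) ^ k *
      ∏ j ∈ Finset.univ.filter (fun j : Fin m => 2 ≤ j.val),
        (X j : MvPolynomial (Fin m) K) ^ (α2 j - k * α1 j)) •
    pderiv (⟨1, by omega⟩ : Fin m)

/-- The element `f = λ x_2 + Σ_{k=0}^d λ_k x_1^k ∏_{j=3}^m x_j^{α_{j2}-kα_{j1}}` of the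
subspace `C`. -/
noncomputable def fpoly (K : Type*) [Field K] (m : ℕ) (hm : 2 ≤ m)
    (α1 α2 : Fin m → ℕ) (d : ℕ) (lam0 : K) (lam : ℕ → K) : MvPolynomial (Fin m) K :=
  lam0 • (X (⟨1, by omega⟩ : Fin m) : MvPolynomial (Fin m) K) +
    ∑ k ∈ Finset.range (d + 1), lam k •
      ((X (⟨0, by omega⟩ : Fin m) : MvPolynomial (Fin m) K) ^ k *
        ∏ j ∈ Finset.univ.filter (fun j : Fin m => 2 ≤ j.val),
          (X j : MvPolynomial (Fin m) K) ^ (α2 j - k * α1 j))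

/-- (Annihilator computation for the non-normalized action.) For
`D_1 = δ + ∂_d`, `D_2 = ∂_0` and
`f = λ x_2 + Σ_{k=0}^d λ_k x_1^k ∏_{j=3}^m x_j^{α_{j2}-kα_{j1}}`, one has
`(s_1 D_1 + s_2 D_2)(f) = 0` iff `λ s_2 + λ_1 s_1 = 0`, `λ_k s_1 = 0` for `2 ≤ k ≤ d`,
and `λ s_1 = 0`; in particular if `λ ≠ 0` and `(s_1 D_1 + s_2 D_2)(f) = 0` then
`s_1 = s_2 = 0`. -/
theorem stmt19 (K : Type*) [Field K] [CharZero K] (m : ℕ) (hm : 2 ≤ m)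
    (α1 α2 : Fin m → ℕ) (d : ℕ) (hd : 1 ≤ d)
    (hα : ∀ j : Fin m, 2 ≤ j.val → d * α1 j ≤ α2 j)
    (lam0 : K) (lam : ℕ → K) :
    ∀ s1 s2 : K,
      ((s1 • (deltaD K m hm α1 + partialD K m hm α1 α2 d) + s2 • partialD K m hm α1 α2 0)
            (fpoly K m hm α1 α2 d lam0 lam) = 0 ↔
          (lam0 * s2 + lam 1 * s1 = 0 ∧ (∀ k : ℕ, 2 ≤ k → k ≤ d → lam k * s1 = 0) ∧
            lam0 * s1 = 0)) ∧
        (lam0 ≠ 0 →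
          (s1 • (deltaD K m hm α1 + partialD K m hm α1 α2 d) + s2 • partialD K m hm α1 α2 0)
              (fpoly K m hm α1 α2 d lam0 lam) = 0 →
            s1 = 0 ∧ s2 = 0) := by
  classical
  intro s1 s2
  set I0 : Fin m := ⟨0, by omega⟩ with hI0def
  set I1 : Fin m := ⟨1, by omega⟩ with hI1def
  set t := Finset.univ.filter (fun j : Fin m => 2 ≤ j.val) with ht
  have hI0t : I0 ∉ t := by simp [ht, hI0def]
  have hI1t : I1 ∉ t := by simp [ht, hI1def]
  have hI01 : I1 ≠ I0 := by simp [hI0def, hI1def, Fin.ext_iff]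
  set μ : ℕ → (Fin m →₀ ℕ) :=
    fun k => Finsupp.single I0 k + ∑ j ∈ t, Finsupp.single j (α2 j - k * α1 j) with hμdef
  have hsum : ∀ (e : Fin m → ℕ) (i : Fin m),
      (∑ j ∈ t, Finsupp.single j (e j)) i = if i ∈ t then e i else 0 := by
    intro e i
    rw [Finsupp.finset_sum_apply]
    simp [Finsupp.single_apply]
  have hμap : ∀ k i, μ k i = (if I0 = i then k else 0) + (if i ∈ t then α2 i - k * α1 i else 0) := by
    intro k i
    simp only [hμdef]
    rw [Finsupp.add_apply, hsum]
    simp [Finsupp.single_apply]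
  have hμI0 : ∀ k, μ k I0 = k := fun k => by simp [hμap, hI0t]
  have hμI1 : ∀ k, μ k I1 = 0 := fun k => by simp [hμap, hI1t, hI01, Ne.symm hI01]
  have hμiff : ∀ k i, μ k = μ i ↔ k = i := by
    intro k i
    constructor
    · intro h; rw [← hμI0 k, h, hμI0]
    · rintro rfl; rfl
  -- monomial form of M k
  have hM : ∀ k : ℕ, ((X I0 : MvPolynomial (Fin m) K) ^ k *
      ∏ j ∈ t, (X j : MvPolynomial (Fin m) K) ^ (α2 j - k * α1 j)) = monomial (μ k) 1 := by
    intro k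
    rw [prodXpow', X_pow_eq_monomial, monomial_mul, one_mul, hμdef]
  set ν : Fin m →₀ ℕ := ∑ j ∈ t, Finsupp.single j (α1 j) with hνdef
  have hνap : ∀ i, ν i = if i ∈ t then α1 i else 0 := fun i => hsum _ i
  have hA : ∀ k : ℕ, 1 ≤ k → k ≤ d →
      ν + (μ k - Finsupp.single I0 1) = μ (k - 1) := by
    intro k hk1 hkd
    ext i
    rw [Finsupp.add_apply, Finsupp.tsub_apply]
    rw [hμap, hμap, hνap, Finsupp.single_apply]
    by_cases hi : i ∈ t
    · have hI0i : ¬ (I0 = i) := fun h => hI0t (h ▸ hi)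
      simp only [hi, if_true, hI0i, if_false]
      have h1 : 2 ≤ i.val := by
        rw [ht] at hi; exact (Finset.mem_filter.mp hi).2
      have h2 : k * α1 i ≤ α2 i :=
        le_trans (Nat.mul_le_mul_right _ hkd) (hα i h1)
      have h3 : (k - 1) * α1 i = k * α1 i - α1 i := by
        rw [Nat.sub_mul, one_mul]
      have h4 : α1 i ≤ k * α1 i := Nat.le_mul_of_pos_left _ (by omega)
      omega
    · by_cases hI0i : I0 = i
      · simp [hI0i, hi]
      · simp [hI0i, hi]
  have hf : fpoly K m hm α1 α2 d lam0 lam =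
      lam0 • X I1 + ∑ k ∈ Finset.range (d+1), lam k • monomial (μ k) (1:K) := by
    unfold fpoly
    congr 1
    exact Finset.sum_congr rfl fun k _ => by rw [hM k]
  have hpd1f : pderiv I1 (fpoly K m hm α1 α2 d lam0 lam) = lam0 • 1 := by
    rw [hf, map_add, Derivation.map_smul, map_sum, pderiv_X_self]
    simp [pderiv_monomial, hμI1]
  have hpd0f : pderiv I0 (fpoly K m hm α1 α2 d lam0 lam) =
      ∑ k ∈ Finset.range (d+1), lam k • monomial (μ k - Finsupp.single I0 1) ((k:K)) := by
    rw [hf, map_add, Derivation.map_smul, map_sum, pderiv_X_of_ne hI01]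
    simp [pderiv_monomial, hμI0]
  have hE : (s1 • (deltaD K m hm α1 + partialD K m hm α1 α2 d) + s2 • partialD K m hm α1 α2 0)
        (fpoly K m hm α1 α2 d lam0 lam)
      = (∑ i ∈ Finset.range d, monomial (μ i) (s1 * (lam (i+1) * ((i:K)+1))))
        + monomial (μ d) (s1 * lam0) + monomial (μ 0) (s2 * lam0) := by
    rw [Derivation.add_apply, Derivation.smul_apply, Derivation.smul_apply,
      Derivation.add_apply]
    unfold deltaD partialD
    rw [Derivation.smul_apply, Derivation.smul_apply, Derivation.smul_apply]
    rw [smul_eq_mul, smul_eq_mul, smul_eq_mul]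
    show s1 • ((∏ j ∈ t, X j ^ α1 j) * (pderiv I0) (fpoly K m hm α1 α2 d lam0 lam) +
          (X I0 ^ d * ∏ j ∈ t, X j ^ (α2 j - d * α1 j)) *
            (pderiv I1) (fpoly K m hm α1 α2 d lam0 lam)) +
        s2 • ((X I0 ^ 0 * ∏ j ∈ t, X j ^ (α2 j - 0 * α1 j)) *
          (pderiv I1) (fpoly K m hm α1 α2 d lam0 lam)) = _
    rw [hpd0f, hpd1f, hM d, hM 0, prodXpow' t α1, ← hνdef]
    rw [Finset.mul_sum]
    have hsum2 : (∑ k ∈ Finset.range (d+1),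
        (monomial ν (1:K)) * (lam k • monomial (μ k - Finsupp.single I0 1) ((k:K)))) =
        ∑ i ∈ Finset.range d, monomial (μ i) (lam (i+1) * ((i:K)+1)) := by
      rw [Finset.sum_range_succ']
      simp only [Nat.cast_zero, monomial_zero, smul_zero, mul_zero, add_zero]
      refine Finset.sum_congr rfl fun i hi => ?_
      rw [Finset.mem_range] at hi
      rw [mul_smul_comm, monomial_mul, one_mul, hA (i+1) (by omega) (by omega)]
      rw [Nat.add_sub_cancel, smul_monomial]
      rw [smul_eq_mul]
      congr 1
      push_cast
      ring
    rw [hsum2]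
    simp [smul_add, Finset.smul_sum, smul_monomial, smul_eq_mul, add_assoc,
      mul_smul_comm]
  set E : MvPolynomial (Fin m) K :=
      (∑ i ∈ Finset.range d, monomial (μ i) (s1 * (lam (i+1) * ((i:K)+1))))
        + monomial (μ d) (s1 * lam0) + monomial (μ 0) (s2 * lam0) with hEdef
  have hco : ∀ i : ℕ, coeff (μ i) E
      = (if i < d then s1 * (lam (i+1) * ((i:K)+1)) else 0)
        + (if d = i then s1 * lam0 else 0) + (if 0 = i then s2 * lam0 else 0) := by
    intro i
    rw [hEdef, coeff_add, coeff_add, coeff_sum]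
    simp only [coeff_monomial, hμiff]
    congr 1
    congr 1
    rw [Finset.sum_ite_eq' (Finset.range d) i (fun k => s1 * (lam (k+1) * ((k:K)+1)))]
    simp [Finset.mem_range]
  have hiff : ((s1 • (deltaD K m hm α1 + partialD K m hm α1 α2 d) + s2 • partialD K m hm α1 α2 0)
        (fpoly K m hm α1 α2 d lam0 lam) = 0 ↔
      (lam0 * s2 + lam 1 * s1 = 0 ∧ (∀ k : ℕ, 2 ≤ k → k ≤ d → lam k * s1 = 0) ∧
        lam0 * s1 = 0)) := by
    rw [hE]
    constructor
    · intro h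
      refine ⟨?_, ?_, ?_⟩
      · have h0 := hco 0
        rw [h, coeff_zero] at h0
        have hd0 : (0:ℕ) < d := by omega
        have hdne : d ≠ 0 := by omega
        rw [if_pos hd0, if_neg (by omega : ¬ d = 0), if_pos rfl] at h0
        push_cast at h0
        linear_combination -h0
      · intro k hk2 hkd
        have h0 := hco (k - 1)
        rw [h, coeff_zero] at h0
        have h1 : k - 1 < d := by omega
        have h2 : ¬ d = k - 1 := by omega
        have h3 : ¬ (0:ℕ) = k - 1 := by omega
        rw [if_pos h1, if_neg h2, if_neg h3, add_zero, add_zero] at h0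
        have hk1 : k - 1 + 1 = k := by omega
        rw [hk1] at h0
        have hc : ((k - 1 : ℕ) : K) + 1 = (k : K) := by
          rw [← Nat.cast_add_one, hk1]
        rw [hc] at h0
        have hkz : (k : K) ≠ 0 := Nat.cast_ne_zero.mpr (by omega)
        have h4 : (lam k * s1) * (k : K) = 0 := by linear_combination -h0
        exact (mul_eq_zero.mp h4).resolve_right hkz
      · have h0 := hco d
        rw [h, coeff_zero] at h0
        have h1 : ¬ d < d := by omega
        have h2 : ¬ (0:ℕ) = d := by omega
        rw [if_neg h1, if_pos rfl, if_neg h2, zero_add, add_zero] at h0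
        linear_combination -h0
    · rintro ⟨h1, h2, h3⟩
      rw [hEdef]
      obtain ⟨e, rfl⟩ : ∃ e, d = e + 1 := ⟨d - 1, by omega⟩
      rw [Finset.sum_range_succ']
      have hz : ∀ i ∈ Finset.range e,
          monomial (μ (i+1)) (s1 * (lam (i+1+1) * (((i+1:ℕ):K)+1))) = 0 := by
        intro i hi
        rw [Finset.mem_range] at hi
        have := h2 (i+2) (by omega) (by omega)
        have hcz : s1 * (lam (i+1+1) * (((i+1:ℕ):K)+1)) = 0 := by
          push_cast
          linear_combination ((i:K)+2) * this
        rw [hcz, monomial_zero]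
      rw [Finset.sum_eq_zero hz, zero_add]
      have hd0 : s1 * lam0 = 0 := by linear_combination h3
      rw [hd0, monomial_zero, add_zero]
      rw [← map_add]
      have : s1 * (lam (0+1) * (((0:ℕ):K)+1)) + s2 * lam0 = 0 := by
        push_cast
        linear_combination h1
      rw [this, monomial_zero]
  refine ⟨hiff, fun hne h0 => ?_⟩
  obtain ⟨h1, _, h3⟩ := hiff.mp h0
  have hs1 : s1 = 0 := by
    rcases mul_eq_zero.mp h3 with h | h
    · exact absurd h hne
    · exact h
  refine ⟨hs1, ?_⟩
  rw [hs1, mul_zero, add_zero] at h1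
  rcases mul_eq_zero.mp h1 with h | h
  · exact absurd h hne
  · exact h
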